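/- arXiv:2511.06375 — 4 statements merged into one kernel-verified Lean document; each statement's English description precedes it below -/
import Mathlib

section
/- Let D : E → F be a closed densely defined operator between Hilbert spaces, and let T be an operator from E to a Hilbert space F' whose restriction T(1+D*D)^{-1/2} extends to a compact operator from E to F'. Then for every ε > 0 there exists M > 0 such that ‖Tx‖ ≤ M‖x‖ + ε‖Dx‖ for all x in Dom(D) ∩ Dom(T). -/
open Filter Topology Metric
open scoped InnerProductSpace

noncomputable section

variable {E F F' : Type*}
  [NormedAddCommGroup E] [InnerProductSpace ℂ E] [CompleteSpace E]
  [NormedAddCommGroup F] [InnerProductSpace ℂ F] [CompleteSpace F]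
  [NormedAddCommGroup F'] [InnerProductSpace ℂ F'] [CompleteSpace F']

lemma compact_rel_bound (R : E →L[ℂ] E) (hRsa : IsSelfAdjoint R)
    (hRdense : Dense (Set.range ⇑R)) (C : E →L[ℂ] F') (hC : IsCompactOperator ⇑C) :
    ∀ ε > (0:ℝ), ∃ M > (0:ℝ), ∀ u : E, ‖C u‖ ≤ M * ‖R u‖ + ε * ‖u‖ := by
  intro ε hε
  -- total boundedness of the image of the closed unit ball
  have htb : TotallyBounded (⇑C '' closedBall (0:E) 1) :=
    (hC.isCompact_closure_image_closedBall 1).totallyBounded.subset subset_closure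
  obtain ⟨t, htfin, htcov⟩ := totallyBounded_iff.mp htb (ε/2) (by linarith)
  set V : Submodule ℂ F' := Submodule.span ℂ t with hV
  haveI : FiniteDimensional ℂ V := FiniteDimensional.span_of_finite ℂ htfin
  -- the projection error is at most (ε/2) ‖u‖
  have hproj : ∀ u : E, ‖C u - (Submodule.orthogonalProjectionOnto V (C u) : F')‖ ≤ (ε/2) * ‖u‖ := by
    have hunit : ∀ u : E, ‖u‖ ≤ 1 → ‖C u - (Submodule.orthogonalProjectionOnto V (C u) : F')‖ ≤ ε/2 := by
      intro u hu
      obtain ⟨y, hyt, hy⟩ := Set.mem_iUnion₂.mp (htcov ⟨u, by simpa using hu, rfl⟩)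
      have hyV : y ∈ V := Submodule.subset_span hyt
      have hmin : ‖C u - (Submodule.orthogonalProjectionOnto V (C u) : F')‖ = ⨅ x : V, ‖C u - x‖ :=
        Submodule.starProjection_minimal (U := V) (C u)
      have hle : ‖C u - (Submodule.orthogonalProjectionOnto V (C u) : F')‖ ≤ ‖C u - y‖ := by
        rw [hmin]
        exact ciInf_le ⟨0, fun b hb => by obtain ⟨z, rfl⟩ := hb; positivity⟩ (⟨y, hyV⟩ : V)
      have : ‖C u - y‖ < ε/2 := by
        have := mem_ball.mp hy
        rwa [dist_eq_norm] at this
      linarith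
    intro u
    rcases eq_or_ne u 0 with rfl | hu0
    · simp
    · have hnu : (0:ℝ) < ‖u‖ := norm_pos_iff.mpr hu0
      have hn : ‖((‖u‖ : ℂ))⁻¹‖ = ‖u‖⁻¹ := by
        simp
      have h1 : ‖(‖u‖⁻¹ : ℂ) • u‖ ≤ 1 := by
        rw [norm_smul, hn, inv_mul_cancel₀ hnu.ne']
      have := hunit ((‖u‖⁻¹ : ℂ) • u) h1
      have hCsmul : C ((‖u‖⁻¹ : ℂ) • u) = (‖u‖⁻¹ : ℂ) • C u := map_smul C _ _
      rw [hCsmul] at this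
      have hPsmul : (Submodule.orthogonalProjectionOnto V ((‖u‖⁻¹ : ℂ) • C u) : F')
          = (‖u‖⁻¹ : ℂ) • (Submodule.orthogonalProjectionOnto V (C u) : F') := by
        rw [map_smul]; rfl
      rw [hPsmul, ← smul_sub, norm_smul, hn] at this
      calc ‖C u - (Submodule.orthogonalProjectionOnto V (C u) : F')‖
          = ‖u‖ * (‖u‖⁻¹ * ‖C u - (Submodule.orthogonalProjectionOnto V (C u) : F')‖) := by
            field_simp
        _ ≤ ‖u‖ * (ε/2) := by
            apply mul_le_mul_of_nonneg_left this hnu.le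
        _ = (ε/2) * ‖u‖ := by ring
  -- orthonormal basis of V
  set n := Module.finrank ℂ V
  set b : OrthonormalBasis (Fin n) ℂ V := stdOrthonormalBasis ℂ V
  set δ : ℝ := ε / (2 * (n + 1)) with hδ
  have hδpos : 0 < δ := by positivity
  -- approximate the adjoint vectors by elements of the range of R
  have hchoice : ∀ i : Fin n, ∃ w : E,
      ‖(ContinuousLinearMap.adjoint C) (b i : F') - R w‖ < δ := by
    intro i
    obtain ⟨z, hz1, hz2⟩ := Metric.dense_iff.mp hRdense
      ((ContinuousLinearMap.adjoint C) (b i : F')) δ hδpos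
    obtain ⟨w, rfl⟩ := hz2
    refine ⟨w, ?_⟩
    rw [← dist_eq_norm]
    exact mem_ball'.mp hz1
  choose w hw using hchoice
  set M₀ : ℝ := ∑ i, ‖w i‖ with hM₀
  refine ⟨M₀ + 1, by positivity, fun u => ?_⟩
  -- bound the projection part
  have hPbound : ‖(Submodule.orthogonalProjectionOnto V (C u) : F')‖ ≤ M₀ * ‖R u‖ + (ε/2) * ‖u‖ := by
    have hsum := b.orthogonalProjectionOnto_apply_eq_sum (C u)
    have hsum' : (Submodule.orthogonalProjectionOnto V (C u) : F') = ∑ i, ⟪(b i : F'), C u⟫_ℂ • (b i : F') := by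
      rw [hsum]; push_cast [Submodule.coe_sum]; rfl
    rw [hsum']
    calc ‖∑ i, ⟪(b i : F'), C u⟫_ℂ • (b i : F')‖
        ≤ ∑ i, ‖⟪(b i : F'), C u⟫_ℂ • (b i : F')‖ := norm_sum_le _ _
      _ ≤ ∑ i, (‖w i‖ * ‖R u‖ + δ * ‖u‖) := by
          apply Finset.sum_le_sum
          intro i _
          have hbi : ‖(b i : F')‖ = 1 := b.orthonormal.1 i
          rw [norm_smul, hbi, mul_one]
          have hadj : ⟪(b i : F'), C u⟫_ℂ = ⟪(ContinuousLinearMap.adjoint C) (b i : F'), u⟫_ℂ :=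
            (ContinuousLinearMap.adjoint_inner_left C u (b i : F')).symm
          rw [hadj]
          have hsplit : ⟪(ContinuousLinearMap.adjoint C) (b i : F'), u⟫_ℂ
              = ⟪R (w i), u⟫_ℂ + ⟪(ContinuousLinearMap.adjoint C) (b i : F') - R (w i), u⟫_ℂ := by
            rw [← inner_add_left]
            congr 1
            abel
          rw [hsplit]
          have h1 : ‖⟪R (w i), u⟫_ℂ‖ ≤ ‖w i‖ * ‖R u‖ := by
            have : ⟪R (w i), u⟫_ℂ = ⟪w i, R u⟫_ℂ := by
              conv_lhs => rw [← ContinuousLinearMap.isSelfAdjoint_iff'.mp hRsa]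
              exact ContinuousLinearMap.adjoint_inner_left R u (w i)
            rw [this]
            exact norm_inner_le_norm _ _
          have h2 : ‖⟪(ContinuousLinearMap.adjoint C) (b i : F') - R (w i), u⟫_ℂ‖ ≤ δ * ‖u‖ :=
            le_trans (norm_inner_le_norm _ _)
              (mul_le_mul_of_nonneg_right (hw i).le (norm_nonneg u))
          calc ‖⟪R (w i), u⟫_ℂ + ⟪(ContinuousLinearMap.adjoint C) (b i : F') - R (w i), u⟫_ℂ‖
              ≤ ‖⟪R (w i), u⟫_ℂ‖ + ‖⟪(ContinuousLinearMap.adjoint C) (b i : F') - R (w i), u⟫_ℂ‖ :=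
                norm_add_le _ _
            _ ≤ ‖w i‖ * ‖R u‖ + δ * ‖u‖ := add_le_add h1 h2
      _ = M₀ * ‖R u‖ + (n * δ) * ‖u‖ := by
          rw [Finset.sum_add_distrib, ← Finset.sum_mul, ← hM₀]
          simp [Finset.sum_const, Finset.card_univ]
          ring
      _ ≤ M₀ * ‖R u‖ + (ε/2) * ‖u‖ := by
          have : (n : ℝ) * δ ≤ ε/2 := by
            rw [hδ, show (n:ℝ) * (ε / (2 * ((n:ℝ) + 1))) = ((n:ℝ) * ε) / (2 * ((n:ℝ) + 1))
              from by ring, div_le_div_iff₀ (by positivity) two_pos]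
            nlinarith [hε.le, Nat.cast_nonneg (α := ℝ) n]
          exact add_le_add_right (mul_le_mul_of_nonneg_right this (norm_nonneg u)) _
  calc ‖C u‖ ≤ ‖C u - (Submodule.orthogonalProjectionOnto V (C u) : F')‖
        + ‖(Submodule.orthogonalProjectionOnto V (C u) : F')‖ := by
          simpa using norm_add_le (C u - (Submodule.orthogonalProjectionOnto V (C u) : F'))
            ((Submodule.orthogonalProjectionOnto V (C u) : F'))
    _ ≤ (ε/2) * ‖u‖ + (M₀ * ‖R u‖ + (ε/2) * ‖u‖) := add_le_add (hproj u) hPbound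
    _ ≤ (M₀ + 1) * ‖R u‖ + ε * ‖u‖ := by nlinarith [norm_nonneg (R u), norm_nonneg u]


/-- `R` is the bounded operator `(1 + D†D)^(-1/2)` : a positive self-adjoint bounded operator
mapping `E` isometrically (with respect to the graph norm) onto the domain of `D`. -/
structure IsSqrtResolvent (D : E →ₗ.[ℂ] F) (R : E →L[ℂ] E) : Prop where
  mem : ∀ x, R x ∈ D.domain
  graph_isometry : ∀ x : E, ‖x‖ ^ 2 = ‖R x‖ ^ 2 + ‖D ⟨R x, mem x⟩‖ ^ 2
  surj : ∀ y ∈ D.domain, ∃ x, R x = y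
  selfAdjoint : IsSelfAdjoint R
  pos : ∀ x, 0 ≤ (inner ℂ (R x) x : ℂ).re

/-- If `D` is a closed densely defined operator between Hilbert spaces and
`T` is an operator such that `T (1 + D†D)^(-1/2)` extends to a compact operator `C`, then for
every `ε > 0` there is `M > 0` with `‖T x‖ ≤ M ‖x‖ + ε ‖D x‖` on `Dom D ∩ Dom T`. -/
theorem relatively_compact_bound
    (D : E →ₗ.[ℂ] F) (hdense : Dense (D.domain : Set E)) (hclosed : D.IsClosed)
    (R : E →L[ℂ] E) (hR : IsSqrtResolvent D R)
    (T : E →ₗ.[ℂ] F') (hRT : ∀ x, R x ∈ T.domain)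
    (C : E →L[ℂ] F') (hC : IsCompactOperator ⇑C)
    (hext : ∀ x, C x = T ⟨R x, hRT x⟩) :
    ∀ ε > (0 : ℝ), ∃ M > (0 : ℝ), ∀ (x : E) (hxD : x ∈ D.domain) (hxT : x ∈ T.domain),
      ‖T ⟨x, hxT⟩‖ ≤ M * ‖x‖ + ε * ‖D ⟨x, hxD⟩‖ := by
  intro ε hε
  have hdenseR : Dense (Set.range ⇑R) :=
    hdense.mono fun y hy => (hR.surj y hy).imp fun x hx => hx
  obtain ⟨M, hM, hbound⟩ := compact_rel_bound R hR.selfAdjoint hdenseR C hC ε hε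
  refine ⟨M + ε, by linarith, fun x hxD hxT => ?_⟩
  obtain ⟨u, hu⟩ := hR.surj x hxD
  have hT : T ⟨x, hxT⟩ = C u := by
    rw [hext u]; congr 1; exact Subtype.ext hu.symm
  have hD : D ⟨x, hxD⟩ = D ⟨R u, hR.mem u⟩ := by
    congr 1; exact Subtype.ext hu.symm
  have hg' : ‖u‖ ^ 2 = ‖x‖ ^ 2 + ‖D ⟨x, hxD⟩‖ ^ 2 := by
    rw [hD, ← hu]; exact hR.graph_isometry u
  have hnorm : ‖u‖ ≤ ‖x‖ + ‖D ⟨x, hxD⟩‖ := by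
    nlinarith [norm_nonneg x, norm_nonneg (D ⟨x, hxD⟩), norm_nonneg u,
      sq_nonneg (‖x‖ + ‖D ⟨x, hxD⟩‖ - ‖u‖)]
  rw [hT]
  calc ‖C u‖ ≤ M * ‖R u‖ + ε * ‖u‖ := hbound u
    _ ≤ M * ‖x‖ + ε * (‖x‖ + ‖D ⟨x, hxD⟩‖) := by
        rw [hu]
        exact add_le_add le_rfl (mul_le_mul_of_nonneg_left hnorm hε.le)
    _ = (M + ε) * ‖x‖ + ε * ‖D ⟨x, hxD⟩‖ := by ring

end
end

section
/- Let D : E ⇀ F be a closed densely defined operator between Hilbert spaces, let T : Dom(D) → E be such that T(1+D*D)^{-1/2} extends to a compact operator on E, and let (χ_n) be self-adjoint bounded operators on E converging strongly to the identity. Then for every ε > 0 there exist M > 0 and N such that ‖Tx‖ ≤ ε‖x‖ + ε‖Dx‖ + M‖χ_n x‖ for all x ∈ Dom(D) and all n ≥ N. -/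
open Filter Topology

noncomputable section

variable {E F : Type*}
  [NormedAddCommGroup E] [InnerProductSpace ℂ E] [CompleteSpace E]
  [NormedAddCommGroup F] [InnerProductSpace ℂ F] [CompleteSpace F]

/-- Let `T : Dom D → E` be such that `T (1 + D†D)^(-1/2)` extends to a compact
operator, and let `(χₙ)` be self-adjoint bounded operators converging strongly to `1`.  Then for
every `ε > 0` there are `M > 0` and `N` such that `‖T x‖ ≤ ε ‖x‖ + ε ‖D x‖ + M ‖χₙ x‖` for all
`x ∈ Dom D` and `n ≥ N`. -/
theorem relatively_compact_bound_with_approximate_unit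
    (D : E →ₗ.[ℂ] F) (hdense : Dense (D.domain : Set E)) (hclosed : D.IsClosed)
    (R : E →L[ℂ] E) (hR : IsSqrtResolvent D R)
    (T : D.domain →ₗ[ℂ] E)
    (C : E →L[ℂ] E) (hC : IsCompactOperator ⇑C)
    (hext : ∀ x : E, C x = T ⟨R x, hR.mem x⟩)
    (χ : ℕ → E →L[ℂ] E) (hsa : ∀ n, IsSelfAdjoint (χ n))
    (hstrong : ∀ x : E, Tendsto (fun n => (χ n) x) atTop (nhds x)) :
    ∀ ε > (0 : ℝ), ∃ M > (0 : ℝ), ∃ N : ℕ, ∀ n ≥ N, ∀ x : D.domain,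
      ‖T x‖ ≤ ε * ‖(x : E)‖ + ε * ‖D x‖ + M * ‖(χ n) (x : E)‖ := by
  intro ε hε
  by_contra hcon
  push_neg at hcon
  -- extract a bad sequence
  choose n hn x hx using fun k : ℕ => hcon (k + 1) (by positivity) k
  choose y hy using fun k : ℕ => hR.surj (x k) (x k).2
  have hRadj : ContinuousLinearMap.adjoint R = R :=
    ContinuousLinearMap.isSelfAdjoint_iff'.mp hR.selfAdjoint
  have hχadj : ∀ m, ContinuousLinearMap.adjoint (χ m) = χ m :=
    fun m => ContinuousLinearMap.isSelfAdjoint_iff'.mp (hsa m)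
  have hCy : ∀ k, C (y k) = T (x k) := fun k =>
    (hext (y k)).trans (congrArg T (Subtype.ext (hy k)))
  have hgraph : ∀ k, ‖y k‖ ^ 2 = ‖(x k : E)‖ ^ 2 + ‖D (x k)‖ ^ 2 := by
    intro k
    have := hR.graph_isometry (y k)
    have h1 : (⟨R (y k), hR.mem (y k)⟩ : D.domain) = x k := Subtype.ext (hy k)
    rw [h1] at this
    rw [this, hy k]
  -- key inequality in terms of `y`
  have key : ∀ k : ℕ, ε * ‖y k‖ + (k + 1 : ℝ) * ‖(χ (n k)) (R (y k))‖ < ‖C (y k)‖ := by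
    intro k
    have h2 := hx k
    rw [← hCy k] at h2
    have h3 : ‖y k‖ ≤ ‖(x k : E)‖ + ‖D (x k)‖ := by
      nlinarith [hgraph k, norm_nonneg (y k), norm_nonneg ((x k : E)), norm_nonneg (D (x k))]
    have h4 : (χ (n k)) (R (y k)) = (χ (n k)) ((x k : E)) := by rw [hy k]
    rw [h4]
    nlinarith [h2, norm_nonneg ((χ (n k)) ((x k : E)))]
  have hynz : ∀ k, y k ≠ 0 := by
    intro k hk
    have := key k
    rw [hk] at this
    simp only [norm_zero, map_zero, mul_zero, add_zero, zero_add] at this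
    exact lt_irrefl 0 this
  have hypos : ∀ k, (0 : ℝ) < ‖y k‖ := fun k => norm_pos_iff.mpr (hynz k)
  -- normalize
  set z : ℕ → E := fun k => ((‖y k‖ : ℂ))⁻¹ • y k with hzdef
  have hz1 : ∀ k, ‖z k‖ = 1 := by
    intro k
    simp only [hzdef, norm_smul, norm_inv, Complex.norm_real, Real.norm_eq_abs,
      abs_of_pos (hypos k)]
    exact inv_mul_cancel₀ (hypos k).ne'
  have keyz : ∀ k : ℕ, ε + (k + 1 : ℝ) * ‖(χ (n k)) (R (z k))‖ < ‖C (z k)‖ := by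
    intro k
    have ha := hypos k
    have hCz : ‖C (z k)‖ = ‖y k‖⁻¹ * ‖C (y k)‖ := by
      simp [hzdef, map_smul, norm_smul, abs_of_pos ha]
    have hχz : ‖(χ (n k)) (R (z k))‖ = ‖y k‖⁻¹ * ‖(χ (n k)) (R (y k))‖ := by
      simp [hzdef, map_smul, norm_smul, abs_of_pos ha]
    rw [hCz, hχz]
    have h5 := mul_lt_mul_of_pos_left (key k) (inv_pos.mpr ha)
    have h6 : ‖y k‖⁻¹ * ‖y k‖ = 1 := inv_mul_cancel₀ ha.ne'
    nlinarith [h5, h6]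
  have hCbound : ∀ k, ‖C (z k)‖ ≤ ‖C‖ := by
    intro k
    calc ‖C (z k)‖ ≤ ‖C‖ * ‖z k‖ := C.le_opNorm _
    _ = ‖C‖ := by rw [hz1 k, mul_one]
  -- the sequence `χ (n k) (R (z k))` tends to zero
  have hχ0 : Tendsto (fun k => ‖(χ (n k)) (R (z k))‖) atTop (𝓝 0) := by
    have hub : ∀ k : ℕ, ‖(χ (n k)) (R (z k))‖ ≤ ‖C‖ * (1 / (k + 1 : ℝ)) := by
      intro k
      have h7 := (keyz k).le.trans (hCbound k)
      have h8 : (0 : ℝ) < (k + 1 : ℝ) := by positivity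
      rw [mul_one_div, le_div_iff₀ h8]
      nlinarith [h7]
    have := tendsto_one_div_add_atTop_nhds_zero_nat.const_mul ‖C‖
    rw [mul_zero] at this
    exact squeeze_zero (fun k => norm_nonneg _) hub (by simpa using this)
  have hnk : Tendsto n atTop atTop := tendsto_atTop_mono hn tendsto_id
  -- `z` is weakly null
  have h0 : ∀ u : E, Tendsto (fun k => (inner ℂ u (z k) : ℂ)) atTop (𝓝 0) := by
    have hdom : ∀ v ∈ D.domain, Tendsto (fun k => (inner ℂ v (z k) : ℂ)) atTop (𝓝 0) := by
      intro v hv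
      obtain ⟨w, hw⟩ := hR.surj v hv
      rw [tendsto_zero_iff_norm_tendsto_zero]
      have hbound : ∀ k, ‖(inner ℂ v (z k) : ℂ)‖ ≤
          ‖w‖ * ‖(χ (n k)) (R (z k))‖ + ‖w - (χ (n k)) w‖ * ‖R‖ := by
        intro k
        have e1 : (inner ℂ v (z k) : ℂ) = inner ℂ w (R (z k)) := by
          rw [← hw]
          conv_lhs => rw [← hRadj]
          exact ContinuousLinearMap.adjoint_inner_left R (z k) w
        have e2 : (inner ℂ w (R (z k)) : ℂ) =
            inner ℂ w ((χ (n k)) (R (z k))) + inner ℂ (w - (χ (n k)) w) (R (z k)) := by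
          rw [inner_sub_left]
          have e3 : (inner ℂ ((χ (n k)) w) (R (z k)) : ℂ) = inner ℂ w ((χ (n k)) (R (z k))) := by
            conv_lhs => rw [← hχadj (n k)]
            exact ContinuousLinearMap.adjoint_inner_left (χ (n k)) (R (z k)) w
          rw [e3]; ring
        rw [e1, e2]
        have hRz : ‖R (z k)‖ ≤ ‖R‖ := by
          calc ‖R (z k)‖ ≤ ‖R‖ * ‖z k‖ := R.le_opNorm _
          _ = ‖R‖ := by rw [hz1 k, mul_one]
        calc ‖(inner ℂ w ((χ (n k)) (R (z k))) : ℂ) + inner ℂ (w - (χ (n k)) w) (R (z k))‖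
            ≤ ‖(inner ℂ w ((χ (n k)) (R (z k))) : ℂ)‖ + ‖(inner ℂ (w - (χ (n k)) w) (R (z k)) : ℂ)‖ :=
              norm_add_le _ _
          _ ≤ ‖w‖ * ‖(χ (n k)) (R (z k))‖ + ‖w - (χ (n k)) w‖ * ‖R (z k)‖ := by
              gcongr <;> exact norm_inner_le_norm _ _
          _ ≤ ‖w‖ * ‖(χ (n k)) (R (z k))‖ + ‖w - (χ (n k)) w‖ * ‖R‖ := by gcongr
      have hlim1 : Tendsto (fun k => ‖w‖ * ‖(χ (n k)) (R (z k))‖) atTop (𝓝 0) := by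
        simpa using hχ0.const_mul ‖w‖
      have hlim2 : Tendsto (fun k => ‖w - (χ (n k)) w‖ * ‖R‖) atTop (𝓝 0) := by
        have : Tendsto (fun m => ‖w - (χ m) w‖) atTop (𝓝 0) := by
          have := (hstrong w).const_sub w
          rw [sub_self] at this
          exact tendsto_zero_iff_norm_tendsto_zero.mp (by simpa using this)
        simpa using (this.comp hnk).mul_const ‖R‖
      have := hlim1.add hlim2
      rw [add_zero] at this
      exact squeeze_zero (fun k => norm_nonneg _) hbound this
    intro u
    rw [tendsto_zero_iff_norm_tendsto_zero, NormedAddCommGroup.tendsto_nhds_zero]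
    intro δ hδ
    obtain ⟨v, hvmem, hvd⟩ : ∃ v ∈ (D.domain : Set E), dist u v < δ / 2 :=
      Metric.mem_closure_iff.mp (hdense u) (δ / 2) (by positivity)
    have hev := (NormedAddCommGroup.tendsto_nhds_zero.mp
      (tendsto_zero_iff_norm_tendsto_zero.mp (hdom v hvmem))) (δ / 2) (by positivity)
    filter_upwards [hev] with k hk
    have e4 : (inner ℂ u (z k) : ℂ) = inner ℂ (u - v) (z k) + inner ℂ v (z k) := by
      rw [inner_sub_left]; ring
    calc ‖‖(inner ℂ u (z k) : ℂ)‖‖ = ‖(inner ℂ u (z k) : ℂ)‖ := by rw [Real.norm_eq_abs,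
          abs_of_nonneg (norm_nonneg _)]
      _ ≤ ‖(inner ℂ (u - v) (z k) : ℂ)‖ + ‖(inner ℂ v (z k) : ℂ)‖ := by rw [e4]; exact norm_add_le _ _
      _ ≤ ‖u - v‖ * ‖z k‖ + ‖(inner ℂ v (z k) : ℂ)‖ := by gcongr; exact norm_inner_le_norm _ _
      _ < δ / 2 + δ / 2 := by
          rw [hz1 k, mul_one]
          have : ‖u - v‖ < δ / 2 := by rwa [dist_eq_norm] at hvd
          have hk' : ‖(inner ℂ v (z k) : ℂ)‖ < δ / 2 := by simpa using hk
          exact add_lt_add this hk'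
      _ = δ := by ring
  -- compactness of `C` yields a norm-convergent subsequence, whose limit must be `0`
  obtain ⟨K, hK, hKsub⟩ :=
    IsCompactOperator.image_closedBall_subset_compact (f := (C : E →ₗ[ℂ] E)) hC 1
  have hmem : ∀ k, C (z k) ∈ K := by
    intro k
    exact hKsub ⟨z k, by simp [Metric.mem_closedBall, dist_zero_right, hz1 k], rfl⟩
  obtain ⟨w, hwK, φ, hφ, hφt⟩ := hK.tendsto_subseq hmem
  have hCz0 : ∀ u : E, Tendsto (fun k => (inner ℂ u (C (z k)) : ℂ)) atTop (𝓝 0) := by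
    intro u
    have : ∀ k, (inner ℂ u (C (z k)) : ℂ) = inner ℂ (ContinuousLinearMap.adjoint C u) (z k) :=
      fun k => (ContinuousLinearMap.adjoint_inner_left C (z k) u).symm
    simpa only [this] using h0 (ContinuousLinearMap.adjoint C u)
  have hw0 : w = 0 := by
    rw [← inner_self_eq_zero (𝕜 := ℂ)]
    exact tendsto_nhds_unique (Tendsto.inner tendsto_const_nhds hφt)
      ((hCz0 w).comp hφ.tendsto_atTop)
  have hεle : ε ≤ ‖w‖ := by
    refine ge_of_tendsto hφt.norm (Eventually.of_forall fun j => ?_)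
    simp only [Function.comp_apply]
    have := keyz (φ j)
    nlinarith [norm_nonneg ((χ (n (φ j))) (R (z (φ j)))), this]
  rw [hw0, norm_zero] at hεle
  exact absurd hεle hε.not_ge

end
end

section
/- Let D be a self-adjoint operator on a Hilbert space E and T a bounded self-adjoint operator such that T + D² is boundedly invertible and T maps Dom(D) into Dom(D). Write R_T = (T + D²)^{-1}. Then (D R_T)* = D R_T + R_T [D,T] R_T, and consequently [D, R_T] = −R_T [D,T] R_T on Dom(D). -/
open Filter Topology

noncomputable section

variable {E : Type*} [NormedAddCommGroup E] [InnerProductSpace ℂ E] [CompleteSpace E]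

/-- Let `D` be self-adjoint, `T` bounded self-adjoint with `T + D²` boundedly
invertible (inverse `R`, given together with `DR = D ∘ R`) and `T (Dom D) ⊆ Dom D`.  Then
`(D R)* = D R + R [D,T] R`, and consequently `[D, R] = −R [D,T] R` on `Dom D`. -/
theorem adjoint_of_D_resolvent
    (D : E →ₗ.[ℂ] E) (hdense : Dense (D.domain : Set E)) (hsa : D.adjoint = D)
    (T : E →L[ℂ] E) (hT : IsSelfAdjoint T)
    (hTdom : ∀ x ∈ D.domain, T x ∈ D.domain)
    -- `R = (T + D²)⁻¹`, a bounded two-sided inverse of `T + D²` on `Dom D²`: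
    (R : E →L[ℂ] E)
    (hR1 : ∀ x, R x ∈ D.domain)
    (hR2 : ∀ x, D ⟨R x, hR1 x⟩ ∈ D.domain)
    (hRright : ∀ x : E, T (R x) + D ⟨D ⟨R x, hR1 x⟩, hR2 x⟩ = x)
    (hRleft : ∀ (x : E) (h1 : x ∈ D.domain) (h2 : D ⟨x, h1⟩ ∈ D.domain),
      R (T x + D ⟨D ⟨x, h1⟩, h2⟩) = x)
    -- `DR` is the bounded operator `D ∘ R`:
    (DR : E →L[ℂ] E) (hDR : ∀ x, DR x = D ⟨R x, hR1 x⟩) :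
    -- `(D R)* = D R + R [D,T] R`:
    (∀ u v : E, (inner ℂ u (DR v) : ℂ) =
        inner ℂ (DR u + R (D ⟨T (R u), hTdom _ (hR1 u)⟩ - T (D ⟨R u, hR1 u⟩))) v) ∧
    -- `[D, R] = −R [D,T] R` on `Dom D`:
    (∀ (x : E) (hx : x ∈ D.domain),
      D ⟨R x, hR1 x⟩ - R (D ⟨x, hx⟩) =
        -(R (D ⟨T (R x), hTdom _ (hR1 x)⟩ - T (D ⟨R x, hR1 x⟩)))) := by
  have key := D.adjoint_isFormalAdjoint hdense
  rw [hsa] at key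
  have hsym : ∀ (x : E) (hx : x ∈ D.domain) (y : E) (hy : y ∈ D.domain),
      (inner ℂ (D ⟨x, hx⟩ : E) y : ℂ) = inner ℂ x (D ⟨y, hy⟩ : E) :=
    fun x hx y hy => key ⟨x, hx⟩ ⟨y, hy⟩
  have hTsym : ∀ x y : E, (inner ℂ (T x) y : ℂ) = inner ℂ x (T y) := fun x y => hT.isSymmetric x y
  -- `R` is self-adjoint
  have hRsym : ∀ u v : E, (inner ℂ (R u) v : ℂ) = inner ℂ u (R v) := by
    intro u v
    calc (inner ℂ (R u) v : ℂ)
        = inner ℂ (R u) (T (R v) + D ⟨D ⟨R v, hR1 v⟩, hR2 v⟩) := by rw [hRright]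
      _ = inner ℂ (R u) (T (R v)) + inner ℂ (R u) (D ⟨D ⟨R v, hR1 v⟩, hR2 v⟩ : E) :=
          inner_add_right _ _ _
      _ = inner ℂ (T (R u)) (R v) + inner ℂ (D ⟨R u, hR1 u⟩ : E) (D ⟨R v, hR1 v⟩ : E) := by
          rw [← hTsym, ← hsym (R u) (hR1 u) _ (hR2 v)]
      _ = inner ℂ (T (R u)) (R v) + inner ℂ (D ⟨D ⟨R u, hR1 u⟩, hR2 u⟩ : E) (R v) := by
          rw [hsym _ (hR2 u) (R v) (hR1 v)]
      _ = inner ℂ (T (R u) + D ⟨D ⟨R u, hR1 u⟩, hR2 u⟩) (R v) := (inner_add_left _ _ _).symm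
      _ = inner ℂ u (R v) := by rw [hRright]
  have part1 : ∀ u v : E, (inner ℂ u (DR v) : ℂ) =
      inner ℂ (DR u + R (D ⟨T (R u), hTdom _ (hR1 u)⟩ - T (D ⟨R u, hR1 u⟩))) v := by
    intro u v
    calc (inner ℂ u (DR v) : ℂ)
        = inner ℂ (T (R u) + D ⟨D ⟨R u, hR1 u⟩, hR2 u⟩) (D ⟨R v, hR1 v⟩ : E) := by
          rw [hDR, hRright]
      _ = inner ℂ (T (R u)) (D ⟨R v, hR1 v⟩ : E)
            + inner ℂ (D ⟨D ⟨R u, hR1 u⟩, hR2 u⟩ : E) (D ⟨R v, hR1 v⟩ : E) := inner_add_left _ _ _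
      _ = inner ℂ (T (R u)) (D ⟨R v, hR1 v⟩ : E)
            + inner ℂ (D ⟨R u, hR1 u⟩ : E) (D ⟨D ⟨R v, hR1 v⟩, hR2 v⟩ : E) := by
          rw [hsym _ (hR2 u) _ (hR2 v)]
      _ = inner ℂ (D ⟨R u, hR1 u⟩ : E) (T (R v))
            + inner ℂ (D ⟨R u, hR1 u⟩ : E) (D ⟨D ⟨R v, hR1 v⟩, hR2 v⟩ : E)
            + (inner ℂ (D ⟨T (R u), hTdom _ (hR1 u)⟩ : E) (R v)
              - inner ℂ (T (D ⟨R u, hR1 u⟩)) (R v)) := by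
          rw [hsym _ (hTdom _ (hR1 u)) (R v) (hR1 v), hTsym (D ⟨R u, hR1 u⟩ : E) (R v)]
          ring
      _ = inner ℂ (D ⟨R u, hR1 u⟩ : E) (T (R v) + D ⟨D ⟨R v, hR1 v⟩, hR2 v⟩)
            + inner ℂ (D ⟨T (R u), hTdom _ (hR1 u)⟩ - T (D ⟨R u, hR1 u⟩)) (R v) := by
          rw [inner_add_right, inner_sub_left]
      _ = inner ℂ (DR u) v + inner ℂ (R (D ⟨T (R u), hTdom _ (hR1 u)⟩ - T (D ⟨R u, hR1 u⟩))) v := by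
          rw [hRright, hRsym, hDR]
      _ = inner ℂ (DR u + R (D ⟨T (R u), hTdom _ (hR1 u)⟩ - T (D ⟨R u, hR1 u⟩))) v :=
          (inner_add_left _ _ _).symm
  refine ⟨part1, ?_⟩
  intro x hx
  have hz : ∀ v : E, (inner ℂ v ((D ⟨R x, hR1 x⟩ : E) - R (D ⟨x, hx⟩)
      + R (D ⟨T (R x), hTdom _ (hR1 x)⟩ - T (D ⟨R x, hR1 x⟩))) : ℂ) = 0 := by
    intro v
    have e1 : (inner ℂ v (D ⟨R x, hR1 x⟩ : E) : ℂ)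
        = inner ℂ (D ⟨R v, hR1 v⟩ : E) x
          + inner ℂ (R (D ⟨T (R v), hTdom _ (hR1 v)⟩ - T (D ⟨R v, hR1 v⟩))) x := by
      have h := part1 v x
      rw [hDR, hDR, inner_add_left] at h
      exact h
    have e4 : (inner ℂ (R (D ⟨T (R v), hTdom _ (hR1 v)⟩ - T (D ⟨R v, hR1 v⟩))) x : ℂ)
        = inner ℂ (T (R v)) (D ⟨R x, hR1 x⟩ : E) - inner ℂ (D ⟨R v, hR1 v⟩ : E) (T (R x)) := by
      rw [hRsym, inner_sub_left, hsym _ (hTdom _ (hR1 v)) (R x) (hR1 x),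
        hTsym (D ⟨R v, hR1 v⟩ : E) (R x)]
    have e2 : (inner ℂ v (R (D ⟨x, hx⟩)) : ℂ) = inner ℂ (D ⟨R v, hR1 v⟩ : E) x := by
      rw [← hRsym, ← hsym (R v) (hR1 v) x hx]
    have e3 : (inner ℂ v (R (D ⟨T (R x), hTdom _ (hR1 x)⟩ - T (D ⟨R x, hR1 x⟩))) : ℂ)
        = inner ℂ (D ⟨R v, hR1 v⟩ : E) (T (R x)) - inner ℂ (T (R v)) (D ⟨R x, hR1 x⟩ : E) := by
      rw [← hRsym, inner_sub_right, ← hsym (R v) (hR1 v) (T (R x)) (hTdom _ (hR1 x)),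
        ← hTsym (R v) (D ⟨R x, hR1 x⟩ : E)]
    rw [inner_add_right, inner_sub_right, e1, e4, e2, e3]
    ring
  have hw : (D ⟨R x, hR1 x⟩ : E) - R (D ⟨x, hx⟩)
      + R (D ⟨T (R x), hTdom _ (hR1 x)⟩ - T (D ⟨R x, hR1 x⟩)) = 0 :=
    inner_self_eq_zero.mp (hz _)
  exact eq_neg_of_add_eq_zero_left hw

end
end

section
/- Let D be a self-adjoint operator on a Hilbert space E, and let k, k' be bounded self-adjoint operators such that k + D² and k' + D² are boundedly invertible and both k(1+D²)^{-1} and k'(1+D²)^{-1} are compact. Then F_{D,k} − F_{D,k'} is a compact operator, where F_{D,k} = D(k + D²)^{-1/2}. -/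
open Filter Topology MeasureTheory Set Real

noncomputable section

namespace BTDC

/-! ### Scalar functions -/

def wf (l t : ℝ) : ℝ := (1 + (l * t) ^ 2)⁻¹
def gf (l t : ℝ) : ℝ := t * wf l t
def rf (l t : ℝ) : ℝ := t ^ 2 * wf l t

lemma den_pos (l t : ℝ) : (0:ℝ) < 1 + (l * t) ^ 2 := by positivity

lemma wf_cont2 : Continuous fun p : ℝ × ℝ => wf p.1 p.2 := by
  unfold wf
  exact Continuous.inv₀ (by fun_prop) fun p => (den_pos p.1 p.2).ne'

lemma gf_cont2 : Continuous fun p : ℝ × ℝ => gf p.1 p.2 :=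
  continuous_snd.mul wf_cont2

lemma rf_cont2 : Continuous fun p : ℝ × ℝ => rf p.1 p.2 :=
  (continuous_snd.pow 2).mul wf_cont2

lemma wf_cont (l : ℝ) : Continuous (wf l) :=
  wf_cont2.comp (continuous_const.prodMk continuous_id)

lemma gf_cont (l : ℝ) : Continuous (gf l) :=
  gf_cont2.comp (continuous_const.prodMk continuous_id)

lemma rf_cont (l : ℝ) : Continuous (rf l) :=
  rf_cont2.comp (continuous_const.prodMk continuous_id)

lemma wf_nonneg (l t : ℝ) : 0 ≤ wf l t := le_of_lt (inv_pos.mpr (den_pos l t))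

lemma wf_le_one (l t : ℝ) : wf l t ≤ 1 := by
  rw [wf]
  rw [inv_le_one_iff₀]
  right; nlinarith [sq_nonneg (l * t)]

lemma abs_wf_le (l t : ℝ) : |wf l t| ≤ 1 := by
  rw [abs_of_nonneg (wf_nonneg l t)]; exact wf_le_one l t

lemma abs_gf_le (l t : ℝ) (hl : 0 < l) : |gf l t| ≤ (2 * l)⁻¹ := by
  have h1 : |gf l t| = |t| * wf l t := by
    rw [gf, abs_mul, abs_of_nonneg (wf_nonneg l t)]
  have hd := den_pos l t
  have h2 : |t| * (1 + (l * t) ^ 2)⁻¹ = |t| / (1 + (l * t) ^ 2) := by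
    rw [div_eq_mul_inv]
  have h3 : (2 * l : ℝ)⁻¹ = 1 / (2 * l) := by rw [one_div]
  rw [h1, wf, h2, h3, div_le_div_iff₀ hd (by positivity)]
  nlinarith [sq_nonneg (|l * t| - 1), sq_abs (l * t), abs_mul l t, abs_of_pos hl]

lemma abs_rf_le (l t : ℝ) (hl : 0 < l) : |rf l t| ≤ (l ^ 2)⁻¹ := by
  have h1 : |rf l t| = t ^ 2 * wf l t := by
    rw [rf, abs_mul, abs_of_nonneg (wf_nonneg l t), abs_of_nonneg (sq_nonneg t)]
  rw [h1, wf]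
  rw [mul_inv_le_iff₀ (den_pos l t), inv_mul_eq_div, le_div_iff₀ (by positivity : (0:ℝ) < l ^ 2)]
  nlinarith [sq_nonneg (l * t), sq_nonneg t]

lemma rf_eq (l t : ℝ) : rf l t = t * gf l t := by
  simp only [rf, gf]; ring

lemma key_scalar_id (l t : ℝ) : l ^ 2 * rf l t + wf l t = 1 := by
  rw [rf, wf]; field_simp; ring

lemma hasDerivAt_arctan_mul (t l : ℝ) :
    HasDerivAt (fun l : ℝ => arctan (l * t)) (gf l t) l := by
  have h2 := (Real.hasDerivAt_arctan (l * t)).comp l (hasDerivAt_mul_const t)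
  refine h2.congr_deriv ?_
  rw [gf, wf, one_div]
  ring

lemma gl_cont (t : ℝ) : Continuous fun l => gf l t :=
  gf_cont2.comp (continuous_id.prodMk continuous_const)

lemma integral_gf (t N : ℝ) : (∫ l in (0:ℝ)..N, gf l t) = arctan (N * t) := by
  rw [intervalIntegral.integral_eq_sub_of_hasDerivAt (fun l _ => hasDerivAt_arctan_mul t l)
    ((gl_cont t).intervalIntegrable 0 N)]
  simp

lemma arctan_le_self {u : ℝ} (hu : 0 ≤ u) : arctan u ≤ u := by
  rcases eq_or_lt_of_le hu with h0 | h0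
  · simp [← h0]
  · have h2 : 0 < arctan u := by
      have := Real.arctan_strictMono h0
      simpa using this
    have h3 := Real.lt_tan h2 (arctan_lt_pi_div_two u)
    rw [Real.tan_arctan] at h3
    exact h3.le

lemma abs_arctan_le (t : ℝ) : |arctan t| ≤ π / 2 :=
  abs_le.mpr ⟨(neg_pi_div_two_lt_arctan t).le, (arctan_lt_pi_div_two t).le⟩

lemma arctan_tail (N t : ℝ) (hN : 0 < N) (ht : 0 ≤ t) :
    |arctan (N * t) * t - π / 2 * t| ≤ N⁻¹ := by
  rcases eq_or_lt_of_le ht with h0 | h0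
  · rw [← h0]
    simp [abs_nonneg]
    positivity
  · have hNt : 0 < N * t := by positivity
    have hid : arctan (N * t) * t - π / 2 * t = -(t * (π / 2 - arctan (N * t))) := by ring
    rw [hid, abs_neg, abs_of_nonneg (by nlinarith [(arctan_lt_pi_div_two (N * t)).le])]
    rw [← Real.arctan_inv_of_pos hNt]
    have h3 : arctan ((N * t)⁻¹) ≤ (N * t)⁻¹ := arctan_le_self (by positivity)
    calc t * arctan ((N * t)⁻¹) ≤ t * (N * t)⁻¹ := by
          exact mul_le_mul_of_nonneg_left h3 h0.le
      _ = N⁻¹ := by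
          field_simp

/-! ### cfc level -/

variable {E : Type*} [NormedAddCommGroup E] [InnerProductSpace ℂ E] [CompleteSpace E]

def cw (a : E →L[ℂ] E) (l : ℝ) : E →L[ℂ] E := cfc (wf l) a
def cg (a : E →L[ℂ] E) (l : ℝ) : E →L[ℂ] E := cfc (gf l) a
def cr (a : E →L[ℂ] E) (l : ℝ) : E →L[ℂ] E := cfc (rf l) a

variable {a : E →L[ℂ] E}

lemma cg_eq (ha : IsSelfAdjoint a) (l : ℝ) : cg a l = a * cw a l := by
  have h := cfc_mul (R := ℝ) (fun t : ℝ => t) (wf l) a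
    continuous_id.continuousOn ((wf_cont l).continuousOn)
  rw [cfc_id' ℝ a ha] at h
  exact h

lemma cg_eq' (ha : IsSelfAdjoint a) (l : ℝ) : cg a l = cw a l * a := by
  have h := cfc_mul (R := ℝ) (wf l) (fun t : ℝ => t) a
    ((wf_cont l).continuousOn) continuous_id.continuousOn
  rw [cfc_id' ℝ a ha] at h
  rw [show cg a l = cfc (fun t => wf l t * t) a from by
    unfold cg; congr 1; funext t; rw [gf]; ring]
  exact h

lemma cr_eq (ha : IsSelfAdjoint a) (l : ℝ) : cr a l = a * cg a l := by
  have h := cfc_mul (R := ℝ) (fun t : ℝ => t) (gf l) a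
    continuous_id.continuousOn ((gf_cont l).continuousOn)
  rw [cfc_id' ℝ a ha] at h
  rw [show cr a l = cfc (fun t => t * gf l t) a from by
    unfold cr; congr 1; funext t; exact rf_eq l t]
  exact h

lemma cr_eq' (ha : IsSelfAdjoint a) (l : ℝ) : cr a l = cg a l * a := by
  have h := cfc_mul (R := ℝ) (gf l) (fun t : ℝ => t) a
    ((gf_cont l).continuousOn) continuous_id.continuousOn
  rw [cfc_id' ℝ a ha] at h
  rw [show cr a l = cfc (fun t => gf l t * t) a from by
    unfold cr; congr 1; funext t; rw [rf_eq l t]; ring]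
  exact h

lemma cr_eq_sq_mul (ha : IsSelfAdjoint a) (l : ℝ) : cr a l = (a * a) * cw a l := by
  rw [cr_eq ha, cg_eq ha, mul_assoc]

lemma cr_eq_mul_sq (ha : IsSelfAdjoint a) (l : ℝ) : cr a l = cw a l * (a * a) := by
  rw [cr_eq' ha, cg_eq' ha, mul_assoc]

lemma cfc_one_id (ha : IsSelfAdjoint a) (l : ℝ) :
    (l ^ 2 : ℝ) • cr a l + cw a l = 1 := by
  have hs := cfc_smul (R := ℝ) (l ^ 2 : ℝ) (rf l) a ((rf_cont l).continuousOn)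
  have hadd := cfc_add (R := ℝ) a (fun t => (l ^ 2 : ℝ) • rf l t) (wf l)
    (((rf_cont l).const_smul (l ^ 2 : ℝ)).continuousOn) ((wf_cont l).continuousOn)
  have hone : cfc (fun t : ℝ => (l ^ 2 : ℝ) • rf l t + wf l t) a = 1 := by
    rw [show (fun t : ℝ => (l ^ 2 : ℝ) • rf l t + wf l t) = fun _ : ℝ => (1 : ℝ) from
      funext fun t => by simpa [smul_eq_mul] using key_scalar_id l t]
    exact cfc_const_one ℝ a ha
  rw [hadd, hs] at hone
  exact hone

lemma norm_cw_le (l : ℝ) : ‖cw a l‖ ≤ 1 :=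
  norm_cfc_le zero_le_one fun t _ => by
    rw [Real.norm_eq_abs]; exact abs_wf_le l t

lemma norm_cg_le (l : ℝ) (hl : 0 < l) : ‖cg a l‖ ≤ (2 * l)⁻¹ :=
  norm_cfc_le (by positivity) fun t _ => by
    rw [Real.norm_eq_abs]; exact abs_gf_le l t hl

lemma norm_cr_le (l : ℝ) (hl : 0 < l) : ‖cr a l‖ ≤ (l ^ 2)⁻¹ :=
  norm_cfc_le (by positivity) fun t _ => by
    rw [Real.norm_eq_abs]; exact abs_rf_le l t hl

lemma norm_cg_le' (ha : IsSelfAdjoint a) (l : ℝ) : ‖cg a l‖ ≤ ‖a‖ := by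
  rw [cg_eq ha]
  calc ‖a * cw a l‖ ≤ ‖a‖ * ‖cw a l‖ := norm_mul_le _ _
    _ ≤ ‖a‖ * 1 := by
        apply mul_le_mul_of_nonneg_left (norm_cw_le l) (norm_nonneg a)
    _ = ‖a‖ := mul_one _

/-- `cfcHom` as a continuous `ℝ`-linear map. -/
def PhiL (a : E →L[ℂ] E) (ha : IsSelfAdjoint a) :
    C(spectrum ℝ a, ℝ) →L[ℝ] (E →L[ℂ] E) :=
  ⟨((cfcHom ha (R := ℝ)) :
      C(spectrum ℝ a, ℝ) →⋆ₐ[ℝ] (E →L[ℂ] E)).toAlgHom.toLinearMap,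
    (isometry_cfcHom a ha).continuous⟩

lemma cfc_eq_PhiL (ha : IsSelfAdjoint a) (f : ℝ → ℝ) (hf : Continuous f) :
    cfc f a = PhiL a ha ((ContinuousMap.mk f hf).restrict (spectrum ℝ a)) := by
  rw [cfc_apply f a ha hf.continuousOn]
  rfl

lemma continuous_cfc_param (ha : IsSelfAdjoint a) {F : ℝ → ℝ → ℝ}
    (hF : Continuous fun p : ℝ × ℝ => F p.1 p.2) :
    Continuous fun l => cfc (F l) a := by
  have hFc : ∀ l, Continuous (F l) := fun l =>
    hF.comp (continuous_const.prodMk continuous_id)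
  have heq : (fun l => cfc (F l) a) =
      fun l => PhiL a ha ((ContinuousMap.mk (F l) (hFc l)).restrict (spectrum ℝ a)) :=
    funext fun l => cfc_eq_PhiL ha _ _
  rw [heq]
  refine (PhiL a ha).continuous.comp ?_
  apply ContinuousMap.continuous_of_continuous_uncurry
  exact hF.comp (continuous_fst.prodMk (continuous_subtype_val.comp continuous_snd))

lemma integral_cg_apply (ha : IsSelfAdjoint a) (N : ℝ) (x : E) :
    (∫ l in (0:ℝ)..N, cg a l x) = cfc (fun t => arctan (N * t)) a x := by
  have harc : Continuous fun t : ℝ => arctan (N * t) :=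
    Real.continuous_arctan.comp (continuous_const.mul continuous_id)
  set γ : ℝ → C(spectrum ℝ a, ℝ) :=
    fun l => (ContinuousMap.mk (gf l) (gf_cont l)).restrict (spectrum ℝ a) with hγdef
  have hγ : Continuous γ := by
    apply ContinuousMap.continuous_of_continuous_uncurry
    exact gf_cont2.comp (continuous_fst.prodMk (continuous_subtype_val.comp continuous_snd))
  have key : (∫ l in (0:ℝ)..N, γ l) = (ContinuousMap.mk _ harc).restrict (spectrum ℝ a) := by
    ext z
    have h := (ContinuousMap.evalCLM (R := ℝ) z).intervalIntegral_comp_comm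
      (hγ.intervalIntegrable (μ := MeasureTheory.volume) 0 N)
    have h2 : (∫ l in (0:ℝ)..N, (ContinuousMap.evalCLM (R := ℝ) z) (γ l)) =
        ∫ l in (0:ℝ)..N, gf l (z : ℝ) := by
      congr 1
    rw [h2] at h
    rw [integral_gf (z : ℝ) N] at h
    exact h.symm
  set L2 : C(spectrum ℝ a, ℝ) →L[ℝ] E :=
    ((ContinuousLinearMap.apply ℂ E x).restrictScalars ℝ).comp (PhiL a ha) with hL2
  have hcg : ∀ l : ℝ, cg a l x = L2 (γ l) := by
    intro l
    have h := cfc_eq_PhiL ha (gf l) (gf_cont l)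
    show (cfc (gf l) a) x = _
    rw [h]
    rfl
  calc (∫ l in (0:ℝ)..N, cg a l x) = ∫ l in (0:ℝ)..N, L2 (γ l) := by
        simp only [hcg]
    _ = L2 (∫ l in (0:ℝ)..N, γ l) :=
        L2.intervalIntegral_comp_comm (hγ.intervalIntegrable (μ := MeasureTheory.volume) 0 N)
    _ = cfc (fun t => arctan (N * t)) a x := by
        rw [key, cfc_eq_PhiL ha _ harc]
        rfl

lemma tendsto_cfc_arctan (ha : IsSelfAdjoint a)
    (hpos : ∀ x, 0 ≤ (inner ℂ (a x) x : ℂ).re)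
    (hinj : Function.Injective a) (x : E) :
    Tendsto (fun N : ℝ => cfc (fun t => arctan (N * t)) a x) atTop
      (𝓝 ((π / 2 : ℝ) • x)) := by
  have harc : ∀ N : ℝ, Continuous fun t : ℝ => arctan (N * t) := fun N =>
    Real.continuous_arctan.comp (continuous_const.mul continuous_id)
  have hposop : a.IsPositive := by
    refine ⟨ha.isSymmetric, fun y => ?_⟩
    simpa [ContinuousLinearMap.reApplyInnerSelf] using hpos y
  have hspec : ∀ t ∈ spectrum ℝ a, 0 ≤ t := by
    have h := hposop.spectrumRestricts
    rw [SpectrumRestricts.nnreal_iff] at h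
    exact h
  have hbound : ∀ N : ℝ, ‖cfc (fun t => arctan (N * t)) a‖ ≤ π / 2 := fun N =>
    norm_cfc_le (by positivity) fun t _ => by
      rw [Real.norm_eq_abs]; exact abs_arctan_le _
  have hdense : Dense (Set.range a) := by
    have hbot : (LinearMap.range (a : E →ₗ[ℂ] E))ᗮ = ⊥ := by
      rw [Submodule.eq_bot_iff]
      intro y hy
      have h1 : ∀ z : E, (inner ℂ (a z) y : ℂ) = 0 := fun z =>
        (Submodule.mem_orthogonal _ y).mp hy (a z) (LinearMap.mem_range_self _ z)
      have h2 : (inner ℂ (a y) (a y) : ℂ) = 0 := by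
        have hsymm := ha.isSymmetric (a y) y
        exact hsymm.symm.trans (h1 (a y))
      have h3 : a y = 0 := inner_self_eq_zero.mp h2
      exact hinj (by simpa using h3)
    have htop := Submodule.topologicalClosure_eq_top_iff.mpr hbot
    have := Submodule.dense_iff_topologicalClosure_eq_top.mpr htop
    simpa [LinearMap.coe_range] using this
  have htail : ∀ N : ℝ, 0 < N → ∀ y : E,
      ‖cfc (fun t => arctan (N * t)) a (a y) - (π / 2 : ℝ) • (a y)‖ ≤ N⁻¹ * ‖y‖ := by
    intro N hN y
    have hc1 : cfc (fun t => arctan (N * t)) a (a y) =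
        (cfc (fun t => arctan (N * t) * t) a) y := by
      rw [cfc_mul (fun t => arctan (N * t)) (fun t : ℝ => t) a
        (harc N).continuousOn continuous_id.continuousOn, cfc_id' ℝ a ha]
      rfl
    have hc2 : (π / 2 : ℝ) • (a y) = (cfc (fun t : ℝ => π / 2 * t) a) y := by
      have h := cfc_smul_id (R := ℝ) (π / 2 : ℝ) a ha
      have h2 : cfc (fun t : ℝ => π / 2 * t) a = (π / 2 : ℝ) • a := by
        rw [← h]; congr 1
      rw [h2]
      rfl
    rw [hc1, hc2]
    have hsub : (cfc (fun t => arctan (N * t) * t) a) y -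
        (cfc (fun t : ℝ => π / 2 * t) a) y =
        (cfc (fun t => arctan (N * t) * t - π / 2 * t) a) y := by
      rw [cfc_sub (fun t => arctan (N * t) * t) (fun t : ℝ => π / 2 * t) a
        ((harc N).mul continuous_id).continuousOn
        (continuous_const.mul continuous_id).continuousOn]
      rfl
    rw [hsub]
    calc ‖(cfc (fun t => arctan (N * t) * t - π / 2 * t) a) y‖
        ≤ ‖cfc (fun t => arctan (N * t) * t - π / 2 * t) a‖ * ‖y‖ :=
          ContinuousLinearMap.le_opNorm _ _
      _ ≤ N⁻¹ * ‖y‖ := by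
          apply mul_le_mul_of_nonneg_right _ (norm_nonneg y)
          exact norm_cfc_le (by positivity) fun t ht => by
            rw [Real.norm_eq_abs]; exact arctan_tail N t hN (hspec t ht)
  rw [Metric.tendsto_atTop]
  intro ε hε
  have hδ : (0:ℝ) < ε / 6 := by positivity
  obtain ⟨y0, hy0⟩ : ∃ y : E, ‖x - a y‖ < ε / 6 := by
    rcases Metric.dense_iff.mp hdense x (ε / 6) hδ with ⟨z, hz1, hz2⟩
    rcases hz2 with ⟨y, rfl⟩
    exact ⟨y, by rw [← dist_eq_norm] at *; rw [dist_comm]; exact Metric.mem_ball.mp hz1⟩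
  refine ⟨max 1 ((‖y0‖ + 1) / (ε / 6)), fun N hN => ?_⟩
  have hN1 : (1:ℝ) ≤ N := le_trans (le_max_left _ _) hN
  have hN0 : (0:ℝ) < N := lt_of_lt_of_le one_pos hN1
  have hNy : N⁻¹ * ‖y0‖ ≤ ε / 6 := by
    have h1 : (‖y0‖ + 1) / (ε / 6) ≤ N := le_trans (le_max_right _ _) hN
    have h2 : N⁻¹ ≤ (ε / 6) / (‖y0‖ + 1) := by
      have h3 : N⁻¹ ≤ ((‖y0‖ + 1) / (ε / 6))⁻¹ := by
        apply inv_anti₀ (by positivity) h1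
      rwa [inv_div] at h3
    calc N⁻¹ * ‖y0‖ ≤ (ε / 6) / (‖y0‖ + 1) * ‖y0‖ :=
          mul_le_mul_of_nonneg_right h2 (norm_nonneg _)
      _ ≤ ε / 6 := by
          rw [div_mul_eq_mul_div, div_le_iff₀ (by positivity)]
          nlinarith [norm_nonneg y0]
  set A := cfc (fun t => arctan (N * t)) a with hA
  have hdec : A x - (π / 2 : ℝ) • x =
      A (x - a y0) + (A (a y0) - (π / 2 : ℝ) • (a y0)) + (π / 2 : ℝ) • (a y0 - x) := by
    simp only [map_sub, smul_sub]
    abel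
  have hpi2 : (π / 2 : ℝ) ≤ 2 := by nlinarith [Real.pi_le_four]
  rw [dist_eq_norm, hdec]
  have hb1 : ‖A (x - a y0)‖ ≤ 2 * (ε / 6) := by
    calc ‖A (x - a y0)‖ ≤ ‖A‖ * ‖x - a y0‖ := ContinuousLinearMap.le_opNorm _ _
      _ ≤ 2 * (ε / 6) := by
          apply mul_le_mul (le_trans (hbound N) hpi2) hy0.le (norm_nonneg _) (by norm_num)
  have hb2 : ‖A (a y0) - (π / 2 : ℝ) • (a y0)‖ ≤ ε / 6 :=
    le_trans (htail N hN0 y0) hNy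
  have hb3 : ‖(π / 2 : ℝ) • (a y0 - x)‖ ≤ 2 * (ε / 6) := by
    rw [norm_smul, Real.norm_eq_abs, abs_of_pos (by positivity)]
    rw [norm_sub_rev]
    apply mul_le_mul hpi2 hy0.le (norm_nonneg _) (by norm_num)
  calc ‖A (x - a y0) + (A (a y0) - (π / 2 : ℝ) • (a y0)) + (π / 2 : ℝ) • (a y0 - x)‖
      ≤ ‖A (x - a y0)‖ + ‖A (a y0) - (π / 2 : ℝ) • (a y0)‖ +
        ‖(π / 2 : ℝ) • (a y0 - x)‖ := norm_add₃_le
    _ ≤ 2 * (ε / 6) + ε / 6 + 2 * (ε / 6) := by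
        exact add_le_add (add_le_add hb1 hb2) hb3
    _ < ε := by linarith

/-- Congruence helper for `LinearPMap` applications. -/
lemma D_congr (D : E →ₗ.[ℂ] E) {x y : E} (hxy : x = y) (hx : x ∈ D.domain)
    (hy : y ∈ D.domain) : D ⟨x, hx⟩ = D ⟨y, hy⟩ := by
  cases hxy; rfl

end BTDC

end

section

open BTDC

variable {E : Type*} [NormedAddCommGroup E] [InnerProductSpace ℂ E] [CompleteSpace E]

set_option maxHeartbeats 2000000 in
set_option synthInstance.maxHeartbeats 1000000 in
/-- Let `D` be self-adjoint and `k`, `k'` bounded self-adjoint operators with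
`k + D²` and `k' + D²` boundedly invertible and `k (1+D²)⁻¹`, `k' (1+D²)⁻¹` compact.  Then
`F_{D,k} − F_{D,k'}` is compact, where `F_{D,k} = D (k + D²)^(-1/2)`. -/
theorem bounded_transforms_differ_by_compact
    (D : E →ₗ.[ℂ] E) (hdense : Dense (D.domain : Set E)) (hsa : D.adjoint = D)
    -- `J1 = (1 + D²)⁻¹`:
    (J1 : E →L[ℂ] E)
    (hI1 : ∀ x, J1 x ∈ D.domain) (hI2 : ∀ x, D ⟨J1 x, hI1 x⟩ ∈ D.domain)
    (hIright : ∀ x : E, J1 x + D ⟨D ⟨J1 x, hI1 x⟩, hI2 x⟩ = x)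
    (hIleft : ∀ (x : E) (h1 : x ∈ D.domain) (h2 : D ⟨x, h1⟩ ∈ D.domain),
      J1 (x + D ⟨D ⟨x, h1⟩, h2⟩) = x)
    -- the two bounded self-adjoint perturbations:
    (k k' : E →L[ℂ] E) (hk : IsSelfAdjoint k) (hk' : IsSelfAdjoint k')
    -- `k (1+D²)⁻¹` and `k' (1+D²)⁻¹` are compact:
    (hkcomp : IsCompactOperator (fun x => k (J1 x)))
    (hk'comp : IsCompactOperator (fun x => k' (J1 x)))
    -- `Jk = (k + D²)⁻¹`:
    (Jk : E →L[ℂ] E)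
    (hJk1 : ∀ x, Jk x ∈ D.domain) (hJk2 : ∀ x, D ⟨Jk x, hJk1 x⟩ ∈ D.domain)
    (hJkright : ∀ x : E, k (Jk x) + D ⟨D ⟨Jk x, hJk1 x⟩, hJk2 x⟩ = x)
    (hJkleft : ∀ (x : E) (h1 : x ∈ D.domain) (h2 : D ⟨x, h1⟩ ∈ D.domain),
      Jk (k x + D ⟨D ⟨x, h1⟩, h2⟩) = x)
    -- `Qk = (k + D²)^(-1/2)`: the positive self-adjoint square root of `Jk`:
    (Qk : E →L[ℂ] E) (hQksa : IsSelfAdjoint Qk)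
    (hQkpos : ∀ x, 0 ≤ (inner ℂ (Qk x) x : ℂ).re) (hQksq : Qk.comp Qk = Jk)
    (hQkdom : ∀ x, Qk x ∈ D.domain)
    -- `Fk = F_{D,k} = D (k + D²)^(-1/2)`:
    (Fk : E →L[ℂ] E) (hFk : ∀ x, Fk x = D ⟨Qk x, hQkdom x⟩)
    -- `Jk' = (k' + D²)⁻¹`:
    (Jk' : E →L[ℂ] E)
    (hJk'1 : ∀ x, Jk' x ∈ D.domain) (hJk'2 : ∀ x, D ⟨Jk' x, hJk'1 x⟩ ∈ D.domain)
    (hJk'right : ∀ x : E, k' (Jk' x) + D ⟨D ⟨Jk' x, hJk'1 x⟩, hJk'2 x⟩ = x)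
    (hJk'left : ∀ (x : E) (h1 : x ∈ D.domain) (h2 : D ⟨x, h1⟩ ∈ D.domain),
      Jk' (k' x + D ⟨D ⟨x, h1⟩, h2⟩) = x)
    -- `Qk' = (k' + D²)^(-1/2)`:
    (Qk' : E →L[ℂ] E) (hQk'sa : IsSelfAdjoint Qk')
    (hQk'pos : ∀ x, 0 ≤ (inner ℂ (Qk' x) x : ℂ).re) (hQk'sq : Qk'.comp Qk' = Jk')
    (hQk'dom : ∀ x, Qk' x ∈ D.domain)
    -- `Fk' = F_{D,k'} = D (k' + D²)^(-1/2)`: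
    (Fk' : E →L[ℂ] E) (hFk' : ∀ x, Fk' x = D ⟨Qk' x, hQk'dom x⟩) :
    IsCompactOperator ⇑(Fk - Fk') := by
  classical
  -- ### Step 1: basic per-side identities
  have hQkmul : Qk * Qk = Jk := hQksq
  have hQk'mul : Qk' * Qk' = Jk' := hQk'sq
  have s1 : ∀ (l : ℝ) (x : E), cr Qk l x = Jk (cw Qk l x) := by
    intro l x
    have h := cr_eq_sq_mul hQksa l
    rw [hQkmul] at h
    rw [h]; rfl
  have s1' : ∀ (l : ℝ) (x : E), cr Qk l x = cw Qk l (Jk x) := by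
    intro l x
    have h := cr_eq_mul_sq hQksa l
    rw [hQkmul] at h
    rw [h]; rfl
  have s1p : ∀ (l : ℝ) (x : E), cr Qk' l x = Jk' (cw Qk' l x) := by
    intro l x
    have h := cr_eq_sq_mul hQk'sa l
    rw [hQk'mul] at h
    rw [h]; rfl
  have s1p' : ∀ (l : ℝ) (x : E), cr Qk' l x = cw Qk' l (Jk' x) := by
    intro l x
    have h := cr_eq_mul_sq hQk'sa l
    rw [hQk'mul] at h
    rw [h]; rfl
  have mem1 : ∀ (l : ℝ) (x : E), cr Qk l x ∈ D.domain := fun l x =>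
    (s1 l x) ▸ hJk1 (cw Qk l x)
  have mem1p : ∀ (l : ℝ) (x : E), cr Qk' l x ∈ D.domain := fun l x =>
    (s1p l x) ▸ hJk'1 (cw Qk' l x)
  have mem2 : ∀ (l : ℝ) (x : E), D ⟨cr Qk l x, mem1 l x⟩ ∈ D.domain := by
    intro l x
    rw [D_congr D (s1 l x) (mem1 l x) (hJk1 _)]
    exact hJk2 _
  have mem2p : ∀ (l : ℝ) (x : E), D ⟨cr Qk' l x, mem1p l x⟩ ∈ D.domain := by
    intro l x
    rw [D_congr D (s1p l x) (mem1p l x) (hJk'1 _)]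
    exact hJk'2 _
  -- one_id applied pointwise
  have hone : ∀ (l : ℝ) (x : E), (l ^ 2 : ℝ) • cr Qk l x + cw Qk l x = x := by
    intro l x
    have h := congrFun (congrArg (fun (T : E →L[ℂ] E) => ⇑T) (cfc_one_id hQksa l)) x
    simpa using h
  have honep : ∀ (l : ℝ) (x : E), (l ^ 2 : ℝ) • cr Qk' l x + cw Qk' l x = x := by
    intro l x
    have h := congrFun (congrArg (fun (T : E →L[ℂ] E) => ⇑T) (cfc_one_id hQk'sa l)) x
    simpa using h
  -- right identity for the primed side
  have s3p : ∀ (l : ℝ) (x : E),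
      k' (cr Qk' l x) + D ⟨D ⟨cr Qk' l x, mem1p l x⟩, mem2p l x⟩ = cw Qk' l x := by
    intro l x
    have hin : D ⟨cr Qk' l x, mem1p l x⟩ = D ⟨Jk' (cw Qk' l x), hJk'1 _⟩ :=
      D_congr D (s1p l x) _ _
    have hout : D ⟨D ⟨cr Qk' l x, mem1p l x⟩, mem2p l x⟩ =
        D ⟨D ⟨Jk' (cw Qk' l x), hJk'1 _⟩, hJk'2 _⟩ := D_congr D hin _ _
    rw [hout, congrArg (⇑k') (s1p l x)]
    exact hJk'right (cw Qk' l x)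
  -- full right identity (primed)
  have s5p : ∀ (l : ℝ) (x : E),
      (l ^ 2 : ℝ) • cr Qk' l x +
        (k' (cr Qk' l x) + D ⟨D ⟨cr Qk' l x, mem1p l x⟩, mem2p l x⟩) = x := by
    intro l x
    rw [s3p l x]
    exact honep l x
  -- left identity for the unprimed side
  have s4 : ∀ (l : ℝ) (y : E) (h1 : y ∈ D.domain) (h2 : D ⟨y, h1⟩ ∈ D.domain),
      cr Qk l (k y + D ⟨D ⟨y, h1⟩, h2⟩) = cw Qk l y := by
    intro l y h1 h2
    rw [s1' l _, hJkleft y h1 h2]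
  have s4full : ∀ (l : ℝ) (y : E) (h1 : y ∈ D.domain) (h2 : D ⟨y, h1⟩ ∈ D.domain),
      cr Qk l ((l ^ 2 : ℝ) • y + (k y + D ⟨D ⟨y, h1⟩, h2⟩)) = y := by
    intro l y h1 h2
    rw [map_add, ContinuousLinearMap.map_smul_of_tower, s4 l y h1 h2]
    exact hone l y
  -- G-links
  have s6 : ∀ (l : ℝ) (x : E) (h1 : cr Qk l x ∈ D.domain),
      Fk (cg Qk l x) = D ⟨cr Qk l x, h1⟩ := by
    intro l x h1
    rw [hFk (cg Qk l x)]
    refine D_congr D ?_ _ _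
    have h := cr_eq hQksa l
    rw [h]; rfl
  have s6p : ∀ (l : ℝ) (x : E) (h1 : cr Qk' l x ∈ D.domain),
      Fk' (cg Qk' l x) = D ⟨cr Qk' l x, h1⟩ := by
    intro l x h1
    rw [hFk' (cg Qk' l x)]
    refine D_congr D ?_ _ _
    have h := cr_eq hQk'sa l
    rw [h]; rfl
  -- ### Step 2: resolvent difference identity
  have d1 : ∀ (l : ℝ) (x : E),
      cr Qk l x - cr Qk' l x = cr Qk l ((k' - k) (cr Qk' l x)) := by
    intro l x
    set y := cr Qk' l x with hy
    have h1 : y ∈ D.domain := mem1p l x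
    have h2 : D ⟨y, h1⟩ ∈ D.domain := mem2p l x
    have hr' := s5p l x
    have hD2 : D ⟨D ⟨y, h1⟩, h2⟩ = x - (l ^ 2 : ℝ) • y - k' y := by
      have ha1 := eq_sub_of_add_eq' hr'
      have ha2 := eq_sub_of_add_eq' ha1
      exact ha2
    have harg : (l ^ 2 : ℝ) • y + (k y + D ⟨D ⟨y, h1⟩, h2⟩) = x + (k y - k' y) := by
      rw [hD2]; abel
    have hfull := s4full l y h1 h2
    rw [harg, map_add, map_sub] at hfull
    have hk'k : (k' - k) y = k' y - k y := rfl
    rw [hk'k, map_sub]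
    have hx2 : cr Qk l x = y - (cr Qk l (k y) - cr Qk l (k' y)) :=
      eq_sub_of_add_eq hfull
    rw [hx2]; abel
  -- ### Step 3: the operator family and its structure
  set fop : ℝ → (E →L[ℂ] E) :=
    fun l => (Fk.comp (cg Qk l)) - (Fk'.comp (cg Qk' l)) with hfop
  have d2 : ∀ l : ℝ,
      fop l = (Fk.comp (cg Qk l)).comp ((k' - k).comp (cr Qk' l)) := by
    intro l
    ext x
    simp only [hfop, ContinuousLinearMap.sub_apply, ContinuousLinearMap.comp_apply]
    rw [s6 l x (mem1 l x), s6p l x (mem1p l x),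
      s6 l (k' (cr Qk' l x) - k (cr Qk' l x)) (mem1 l _)]
    have hsub := D.toFun.map_sub ⟨cr Qk l x, mem1 l x⟩ ⟨cr Qk' l x, mem1p l x⟩
    have hco : (⟨cr Qk l x, mem1 l x⟩ - ⟨cr Qk' l x, mem1p l x⟩ : D.domain) =
        ⟨cr Qk l x - cr Qk' l x, sub_mem (mem1 l x) (mem1p l x)⟩ := rfl
    rw [hco] at hsub
    have : D ⟨cr Qk l x, mem1 l x⟩ - D ⟨cr Qk' l x, mem1p l x⟩ =
        D ⟨cr Qk l x - cr Qk' l x, sub_mem (mem1 l x) (mem1p l x)⟩ := hsub.symm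
    rw [this]
    exact D_congr D (d1 l x) _ _
    -- note: `(k' - k) (cr Qk' l x)` is definitionally `k' _ - k _`
  -- ### Step 4: compactness of each fop l
  have hC0 : IsCompactOperator (fun x => (k' - k) (J1 x)) := by
    have h := hk'comp.sub hkcomp
    have heq : (fun x => k' (J1 x)) - (fun x => k (J1 x)) =
        fun x => (k' - k) (J1 x) := by
      funext x
      simp [ContinuousLinearMap.sub_apply]
    rwa [heq] at h
  have hK' : IsCompactOperator (fun x => (k' - k) (Jk' x)) := by
    have hrel : ∀ x : E, (k' - k) (Jk' x) =
        (k' - k) (J1 x) + (k' - k) (J1 ((Jk' - k'.comp Jk') x)) := by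
      intro x
      have hy := hIleft (Jk' x) (hJk'1 x) (hJk'2 x)
      have hD2 : D ⟨D ⟨Jk' x, hJk'1 x⟩, hJk'2 x⟩ = x - k' (Jk' x) :=
        eq_sub_of_add_eq' (hJk'right x)
      rw [hD2] at hy
      have hsplit : Jk' x + (x - k' (Jk' x)) = x + (Jk' x - k' (Jk' x)) := by abel
      rw [hsplit, map_add] at hy
      have harg : (Jk' - k'.comp Jk') x = Jk' x - k' (Jk' x) := rfl
      rw [harg, ← map_add (k' - k), hy]
    have h1 := hC0.comp_clm (Jk' - k'.comp Jk')
    have h2 := hC0.add h1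
    have heq : ((fun x => (k' - k) (J1 x)) +
        ((fun x => (k' - k) (J1 x)) ∘ ⇑(Jk' - k'.comp Jk'))) =
        fun x => (k' - k) (Jk' x) := by
      funext x
      simp only [Pi.add_apply, Function.comp_apply]
      exact (hrel x).symm
    rwa [heq] at h2
  have d3 : ∀ l : ℝ, IsCompactOperator ⇑(fop l) := by
    intro l
    have hcomp1 : IsCompactOperator (fun x => (k' - k) (cr Qk' l x)) := by
      have h := hK'.comp_clm (cw Qk' l)
      have heq : ((fun x => (k' - k) (Jk' x)) ∘ ⇑(cw Qk' l)) =
          fun x => (k' - k) (cr Qk' l x) := by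
        funext x
        simp only [Function.comp_apply]
        rw [s1p l x]
      rwa [heq] at h
    have h2 := hcomp1.clm_comp (Fk.comp (cg Qk l))
    rw [d2 l]
    have heq2 : (⇑(Fk.comp (cg Qk l)) ∘ fun x => (k' - k) (cr Qk' l x)) =
        ⇑((Fk.comp (cg Qk l)).comp ((k' - k).comp (cr Qk' l))) := rfl
    rwa [heq2] at h2
  -- ### Step 5: continuity and integrability
  have hcgc : Continuous fun l => cg Qk l := continuous_cfc_param hQksa gf_cont2
  have hcgc' : Continuous fun l => cg Qk' l := continuous_cfc_param hQk'sa gf_cont2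
  have hcont : Continuous fop := by
    apply Continuous.sub
    · exact ((ContinuousLinearMap.compL ℂ E E E Fk).continuous).comp hcgc
    · exact ((ContinuousLinearMap.compL ℂ E E E Fk').continuous).comp hcgc'
  have hbound1 : ∀ l : ℝ, ‖fop l‖ ≤ ‖Fk‖ * ‖Qk‖ + ‖Fk'‖ * ‖Qk'‖ := by
    intro l
    refine le_trans (norm_sub_le _ _) (add_le_add ?_ ?_)
    · refine le_trans (ContinuousLinearMap.opNorm_comp_le _ _) ?_
      exact mul_le_mul_of_nonneg_left (norm_cg_le' hQksa l) (norm_nonneg Fk)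
    · refine le_trans (ContinuousLinearMap.opNorm_comp_le _ _) ?_
      exact mul_le_mul_of_nonneg_left (norm_cg_le' hQk'sa l) (norm_nonneg Fk')
  have hbound2 : ∀ l : ℝ, 1 ≤ l →
      ‖fop l‖ ≤ (‖Fk‖ * ‖k' - k‖) * l ^ (-3 : ℝ) := by
    intro l hl
    have hl0 : (0:ℝ) < l := lt_of_lt_of_le one_pos hl
    have e1 : ‖Fk.comp (cg Qk l)‖ ≤ ‖Fk‖ * l⁻¹ := by
      refine le_trans (ContinuousLinearMap.opNorm_comp_le _ _) ?_
      refine mul_le_mul_of_nonneg_left (le_trans (norm_cg_le (a := Qk) l hl0) ?_)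
        (norm_nonneg Fk)
      rw [inv_le_inv₀ (by linarith) hl0]
      linarith
    have e2 : ‖(k' - k).comp (cr Qk' l)‖ ≤ ‖k' - k‖ * (l ^ 2)⁻¹ := by
      refine le_trans (ContinuousLinearMap.opNorm_comp_le _ _) ?_
      exact mul_le_mul_of_nonneg_left (norm_cr_le (a := Qk') l hl0) (norm_nonneg _)
    rw [d2 l]
    refine le_trans (ContinuousLinearMap.opNorm_comp_le _ _) ?_
    have := mul_le_mul e1 e2 (norm_nonneg _) (by positivity)
    refine le_trans this (le_of_eq ?_)
    rw [Real.rpow_neg hl0.le]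
    rw [show (3:ℝ) = ((3:ℕ) : ℝ) from by norm_num, Real.rpow_natCast]
    rw [show (l : ℝ) ^ (3:ℕ) = l * l ^ 2 from by ring, mul_inv]
    ring
  have hFmeas : AEStronglyMeasurable fop (volume.restrict (Set.Ioi (0:ℝ))) :=
    hcont.aestronglyMeasurable.restrict
  have hFint : IntegrableOn fop (Set.Ioi (0:ℝ)) volume := by
    have hsplit : Set.Ioc (0:ℝ) 1 ∪ Set.Ioi (1:ℝ) = Set.Ioi (0:ℝ) :=
      Set.Ioc_union_Ioi_eq_Ioi zero_le_one
    rw [← hsplit]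
    apply MeasureTheory.IntegrableOn.union
    · have hconst : IntegrableOn (fun _ : ℝ => ‖Fk‖ * ‖Qk‖ + ‖Fk'‖ * ‖Qk'‖)
          (Set.Ioc (0:ℝ) 1) volume :=
        integrableOn_const measure_Ioc_lt_top.ne
      refine MeasureTheory.Integrable.mono' hconst
        hcont.aestronglyMeasurable.restrict ?_
      exact Filter.Eventually.of_forall fun l => hbound1 l
    · refine MeasureTheory.Integrable.mono'
        (((integrableOn_Ioi_rpow_of_lt (a := (-3 : ℝ)) (by norm_num) one_pos)).const_mul (‖Fk‖ * ‖k' - k‖))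
        hcont.aestronglyMeasurable.restrict ?_
      filter_upwards [MeasureTheory.ae_restrict_mem measurableSet_Ioi] with l hl
      exact hbound2 l (le_of_lt hl)
  -- ### Step 6: the integral operator S and its compactness
  set S : E →L[ℂ] E := ∫ l in Set.Ioi (0:ℝ), fop l with hS
  have hScomp : IsCompactOperator ⇑S := by
    set K : Submodule ℂ (E →L[ℂ] E) := compactOperator (RingHom.id ℂ) E E with hKdef
    haveI hKclosed : IsClosed (K : Set (E →L[ℂ] E)) := isClosed_setOf_isCompactOperator
    let πK : (E →L[ℂ] E) →L[ℂ] ((E →L[ℂ] E) ⧸ K) :=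
      LinearMap.mkContinuous K.mkQ 1 (fun f => by
        simpa using Submodule.Quotient.norm_mk_le K f)
    have hπ0 : ∀ l : ℝ, πK (fop l) = 0 := fun l =>
      (Submodule.Quotient.mk_eq_zero K).mpr (d3 l)
    have hπS : πK S = 0 := by
      rw [hS, ← ContinuousLinearMap.integral_comp_comm πK hFint]
      simp only [hπ0]
      simp
    exact (Submodule.Quotient.mk_eq_zero K).mp hπS
  -- ### Step 7: pointwise identification of S
  have hQkinj : Function.Injective ⇑Qk := by
    have hJkker : ∀ z : E, Jk z = 0 → z = 0 := by
      intro z hz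
      have e1 : D ⟨Jk z, hJk1 z⟩ = D ⟨(0:E), D.domain.zero_mem⟩ := D_congr D hz _ _
      have e0 : D ⟨(0:E), D.domain.zero_mem⟩ = 0 := by
        have : (⟨(0:E), D.domain.zero_mem⟩ : D.domain) = 0 := rfl
        rw [this]
        exact D.toFun.map_zero
      have e2 : D ⟨D ⟨Jk z, hJk1 z⟩, hJk2 z⟩ = 0 := by
        rw [D_congr D (e1.trans e0) (hJk2 z) D.domain.zero_mem]
        exact e0
      have h := hJkright z
      rw [e2, congrArg (⇑k) hz] at h
      simpa using h.symm
    intro u v huv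
    have h0 : Qk (u - v) = 0 := by rw [map_sub, huv, sub_self]
    have h1 : Jk (u - v) = 0 := by
      rw [← hQksq]
      show Qk (Qk (u - v)) = 0
      rw [h0, map_zero]
    have := hJkker _ h1
    exact sub_eq_zero.mp this
  have hQk'inj : Function.Injective ⇑Qk' := by
    have hJk'ker : ∀ z : E, Jk' z = 0 → z = 0 := by
      intro z hz
      have e1 : D ⟨Jk' z, hJk'1 z⟩ = D ⟨(0:E), D.domain.zero_mem⟩ := D_congr D hz _ _
      have e0 : D ⟨(0:E), D.domain.zero_mem⟩ = 0 := by
        have : (⟨(0:E), D.domain.zero_mem⟩ : D.domain) = 0 := rfl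
        rw [this]
        exact D.toFun.map_zero
      have e2 : D ⟨D ⟨Jk' z, hJk'1 z⟩, hJk'2 z⟩ = 0 := by
        rw [D_congr D (e1.trans e0) (hJk'2 z) D.domain.zero_mem]
        exact e0
      have h := hJk'right z
      rw [e2, congrArg (⇑k') hz] at h
      simpa using h.symm
    intro u v huv
    have h0 : Qk' (u - v) = 0 := by rw [map_sub, huv, sub_self]
    have h1 : Jk' (u - v) = 0 := by
      rw [← hQk'sq]
      show Qk' (Qk' (u - v)) = 0
      rw [h0, map_zero]
    have := hJk'ker _ h1
    exact sub_eq_zero.mp this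
  have hSx : ∀ x : E, S x = (π / 2 : ℝ) • (Fk x - Fk' x) := by
    intro x
    have hxint : IntegrableOn (fun l => fop l x) (Set.Ioi (0:ℝ)) volume :=
      hFint.apply_continuousLinearMap x
    have hSx1 : S x = ∫ l in Set.Ioi (0:ℝ), fop l x := by
      rw [hS]
      exact ContinuousLinearMap.integral_apply hFint x
    have hten1 : Tendsto (fun N : ℝ => ∫ l in (0:ℝ)..N, fop l x) atTop
        (𝓝 (∫ l in Set.Ioi (0:ℝ), fop l x)) :=
      MeasureTheory.intervalIntegral_tendsto_integral_Ioi 0 hxint tendsto_id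
    have hii : ∀ N : ℝ, IntervalIntegrable (fun l => cg Qk l x) volume 0 N := fun N =>
      (((ContinuousLinearMap.apply ℂ E x).continuous.comp hcgc)).intervalIntegrable 0 N
    have hii' : ∀ N : ℝ, IntervalIntegrable (fun l => cg Qk' l x) volume 0 N := fun N =>
      (((ContinuousLinearMap.apply ℂ E x).continuous.comp hcgc')).intervalIntegrable 0 N
    have d8 : ∀ N : ℝ, (∫ l in (0:ℝ)..N, fop l x) =
        Fk (cfc (fun t => arctan (N * t)) Qk x) -
        Fk' (cfc (fun t => arctan (N * t)) Qk' x) := by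
      intro N
      have he : (fun l => fop l x) =
          fun l => Fk (cg Qk l x) - Fk' (cg Qk' l x) := by
        funext l
        simp [hfop, ContinuousLinearMap.sub_apply]
      have hii2 : IntervalIntegrable (fun l => Fk (cg Qk l x)) volume 0 N :=
        ((Fk.continuous.comp
          ((ContinuousLinearMap.apply ℂ E x).continuous.comp hcgc)).intervalIntegrable 0 N)
      have hii2' : IntervalIntegrable (fun l => Fk' (cg Qk' l x)) volume 0 N :=
        ((Fk'.continuous.comp
          ((ContinuousLinearMap.apply ℂ E x).continuous.comp hcgc')).intervalIntegrable 0 N)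
      rw [he, intervalIntegral.integral_sub hii2 hii2']
      rw [Fk.intervalIntegral_comp_comm (hii N), Fk'.intervalIntegral_comp_comm (hii' N)]
      rw [integral_cg_apply hQksa N x, integral_cg_apply hQk'sa N x]
    have hlim : Tendsto (fun N : ℝ => ∫ l in (0:ℝ)..N, fop l x) atTop
        (𝓝 ((π / 2 : ℝ) • (Fk x - Fk' x))) := by
      have t1 := tendsto_cfc_arctan hQksa hQkpos hQkinj x
      have t2 := tendsto_cfc_arctan hQk'sa hQk'pos hQk'inj x
      have t1' := (Fk.continuous.tendsto _).comp t1
      have t2' := (Fk'.continuous.tendsto _).comp t2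
      have tt := t1'.sub t2'
      have hval : Fk ((π / 2 : ℝ) • x) - Fk' ((π / 2 : ℝ) • x) =
          (π / 2 : ℝ) • (Fk x - Fk' x) := by
        rw [Fk.map_smul_of_tower, Fk'.map_smul_of_tower, smul_sub]
      rw [hval] at tt
      have hfeq : (fun N : ℝ => ∫ l in (0:ℝ)..N, fop l x) =
          fun N : ℝ => Fk (cfc (fun t => arctan (N * t)) Qk x) -
            Fk' (cfc (fun t => arctan (N * t)) Qk' x) := funext fun N => d8 N
      rw [hfeq]
      exact tt
    rw [hSx1]
    exact tendsto_nhds_unique hten1 hlim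
  -- ### Step 8: conclusion
  have hfinal : ⇑(Fk - Fk') = (2 / π : ℝ) • ⇑S := by
    funext x
    have h := hSx x
    have hπ : (π : ℝ) ≠ 0 := Real.pi_ne_zero
    show (Fk - Fk') x = (2 / π : ℝ) • S x
    rw [ContinuousLinearMap.sub_apply, h, smul_smul]
    rw [show (2 / π : ℝ) * (π / 2) = 1 from by field_simp]
    rw [one_smul]
  rw [show ⇑(Fk - Fk') = (2 / π : ℝ) • ⇑S from hfinal]
  exact hScomp.smul (2 / π : ℝ)

end
end
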